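/- Let k be a field with char(k) ≠ 2 and let C be the quotient of the free associative k-algebra on x₁, x₂ by the two-sided ideal generated by x₁x₂ + x₂x₁ + x₁² + x₂² and x₁²x₂ − x₂x₁². Then the image of x₁ + x₂ in C is nonzero and its square is zero; consequently C has nonzero zero divisors (it is not a domain). -/
import Mathlib


open FreeAlgebra

/-- The defining relations of the graded Clifford algebra of Example 2.2:
`x₁x₂ + x₂x₁ + x₁² + x₂² = 0` and `x₁²x₂ − x₂x₁² = 0`, as a relation on the free
algebra `k⟨x₁,x₂⟩` (generators indexed by `Fin 2`, with `x₁ = ι k 0`, `x₂ = ι k 1`). -/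
def gcaRel (k : Type*) [Field k] :
    FreeAlgebra k (Fin 2) → FreeAlgebra k (Fin 2) → Prop := fun a b =>
  (a = ι k 0 * ι k 1 + ι k 1 * ι k 0 + ι k 0 ^ 2 + ι k 1 ^ 2 ∧ b = 0) ∨
  (a = ι k 0 ^ 2 * ι k 1 - ι k 1 * ι k 0 ^ 2 ∧ b = 0)

/-- Evaluation on the dual numbers: x₁ ↦ ε, x₂ ↦ 0. The relations hold. -/
noncomputable def gcaEval (k : Type*) [Field k] :
    FreeAlgebra k (Fin 2) →ₐ[k] DualNumber k :=
  FreeAlgebra.lift k (fun i => if i = 0 then DualNumber.eps else 0)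

lemma gcaEval_rel (k : Type*) [Field k] {a b : FreeAlgebra k (Fin 2)}
    (h : gcaRel k a b) : gcaEval k a = gcaEval k b := by
  rcases h with ⟨ha, hb⟩ | ⟨ha, hb⟩ <;> subst ha <;> subst hb <;>
    simp [gcaEval, sq, DualNumber.eps_mul_eps]

/-- Over a field of characteristic ≠ 2, in the graded Clifford algebra
`C = k⟨x₁,x₂⟩ / ⟨x₁x₂ + x₂x₁ + x₁² + x₂², x₁²x₂ − x₂x₁²⟩`, the image of `x₁ + x₂`
is nonzero with square zero; hence `C` has nonzero zero divisors (is not a domain). -/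
theorem gca_not_domain (k : Type*) [Field k] (hchar : ringChar k ≠ 2) :
    RingQuot.mkAlgHom k (gcaRel k) (ι k 0 + ι k 1) ≠ 0
    ∧ (RingQuot.mkAlgHom k (gcaRel k) (ι k 0 + ι k 1)) ^ 2 = 0
    ∧ ∃ a b : RingQuot (gcaRel k), a ≠ 0 ∧ b ≠ 0 ∧ a * b = 0 := by
  have hne : RingQuot.mkAlgHom k (gcaRel k) (ι k 0 + ι k 1) ≠ 0 := by
    intro h
    have := congrArg (RingQuot.liftAlgHom k (s := gcaRel k)
      ⟨gcaEval k, fun {_ _} hr => gcaEval_rel k hr⟩) h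
    rw [RingQuot.liftAlgHom_mkAlgHom_apply, map_zero] at this
    simp [gcaEval] at this
    exact one_ne_zero (α := k) (by simpa using congrArg TrivSqZeroExt.snd this)
  have hsq : (RingQuot.mkAlgHom k (gcaRel k) (ι k 0 + ι k 1)) ^ 2 = 0 := by
    have h0 : RingQuot.mkAlgHom k (gcaRel k)
        (ι k 0 * ι k 1 + ι k 1 * ι k 0 + ι k 0 ^ 2 + ι k 1 ^ 2) = 0 := by
      have := RingQuot.mkAlgHom_rel k (s := gcaRel k) (Or.inl ⟨rfl, rfl⟩)
      simpa using this
    calc (RingQuot.mkAlgHom k (gcaRel k) (ι k 0 + ι k 1)) ^ 2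
        = RingQuot.mkAlgHom k (gcaRel k) ((ι k 0 + ι k 1) ^ 2) := by rw [map_pow]
      _ = RingQuot.mkAlgHom k (gcaRel k)
          (ι k 0 * ι k 1 + ι k 1 * ι k 0 + ι k 0 ^ 2 + ι k 1 ^ 2) := by
            congr 1; noncomm_ring
      _ = 0 := h0
  refine ⟨hne, hsq, ?_⟩
  exact ⟨_, _, hne, hne, by rw [← sq]; exact hsq⟩
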